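/- Let f, σ, τ be as in the context. (i) If ρ_0 ∈ [0,σ] and ρ̂ ∈ (τ(ρ_0), 1], then ρ_0 < ρ̂ and f(ρ̂) < f(ρ_0); in particular the shock speed (f(ρ̂) − f(ρ_0))/(ρ̂ − ρ_0) is strictly negative. (ii) If ρ_0 ∈ [σ,1] and ρ̂ ∈ [0, τ(ρ_0)), then ρ̂ < ρ_0 and f(ρ̂) < f(ρ_0); in particular the shock speed (f(ρ_0) − f(ρ̂))/(ρ_0 − ρ̂) is strictly positive. -/

import Mathlib

open Set

/-!
A strictly concave flux with maximum at `σ` is strictly increasing on `[0, σ]` and strictly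
decreasing on `[σ, 1]`; in particular it is injective on each branch, so `τ` exchanges the two
branches. For `ρ₀ ≤ σ` this places `τ ρ₀ ≥ σ`, and any `ρ̂ > τ ρ₀` lies further down the
decreasing branch, whence `ρ̂ > ρ₀` and `f ρ̂ < f (τ ρ₀) = f ρ₀`. The case `ρ₀ ≥ σ` is symmetric.
-/

section StrictConcaveOn

variable {𝕜 β : Type*} [Field 𝕜] [LinearOrder 𝕜] [IsStrictOrderedRing 𝕜]
  [AddCommMonoid β] [LinearOrder β] [IsOrderedAddMonoid β] [Module 𝕜 β]
  [PosSMulStrictMono 𝕜 β] {s : Set 𝕜} {f : 𝕜 → β} {σ x : 𝕜}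

theorem StrictConcaveOn.lt_of_isMaxOn (hf : StrictConcaveOn 𝕜 s f) (hmax : IsMaxOn f s σ)
    (hσ : σ ∈ s) (hx : x ∈ s) (hxσ : x ≠ σ) : f x < f σ :=
  (hmax hx).lt_of_ne fun h =>
    hxσ <| hf.eq_of_isMaxOn (fun _ hz => h ▸ hmax hz) hmax hx hσ

theorem StrictConcaveOn.strictMonoOn_of_isMaxOn (hf : StrictConcaveOn 𝕜 s f)
    (hmax : IsMaxOn f s σ) (hσ : σ ∈ s) : StrictMonoOn f (s ∩ Iic σ) := by
  rintro x ⟨hx, -⟩ y ⟨-, hyσ⟩ hxy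
  obtain rfl | hyσ := hyσ.eq_or_lt
  · exact hf.lt_of_isMaxOn hmax hσ hx hxy.ne
  have hmin := hf.lt_on_openSegment hx hσ (hxy.trans hyσ).ne <|
    Ioo_subset_openSegment ⟨hxy, hyσ⟩
  rwa [min_eq_left (hmax hx)] at hmin

theorem StrictConcaveOn.strictAntiOn_of_isMaxOn (hf : StrictConcaveOn 𝕜 s f)
    (hmax : IsMaxOn f s σ) (hσ : σ ∈ s) : StrictAntiOn f (s ∩ Ici σ) := by
  rintro x ⟨-, hσx⟩ y ⟨hy, -⟩ hxy
  obtain rfl | hσx := hσx.eq_or_lt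
  · exact hf.lt_of_isMaxOn hmax hσ hy hxy.ne'
  have hmin := hf.lt_on_openSegment hσ hy (hσx.trans hxy).ne <|
    Ioo_subset_openSegment ⟨hσx, hxy⟩
  rwa [min_eq_right (hmax hy)] at hmin

end StrictConcaveOn

section Partner

variable {f τ : ℝ → ℝ} {σ ρ : ℝ}

theorem tau_mem_Icc_right (hmono : StrictMonoOn f (Icc 0 σ)) (hσ1 : σ ≤ 1) (hτσ : τ σ = σ)
    (hτ : ∀ ρ ∈ Icc (0 : ℝ) 1, ρ ≠ σ → τ ρ ∈ Icc (0 : ℝ) 1 ∧ τ ρ ≠ ρ ∧ f (τ ρ) = f ρ)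
    (hρ : ρ ∈ Icc 0 σ) : τ ρ ∈ Icc σ 1 ∧ f (τ ρ) = f ρ := by
  obtain rfl | hρσ := hρ.2.eq_or_lt
  · exact ⟨by simp [hτσ, hσ1], by rw [hτσ]⟩
  obtain ⟨hτ01, hτρ, hfτ⟩ := hτ ρ ⟨hρ.1, hρσ.le.trans hσ1⟩ hρσ.ne
  refine ⟨⟨not_lt.1 fun hτσ' => hτρ ?_, hτ01.2⟩, hfτ⟩
  exact hmono.injOn ⟨hτ01.1, hτσ'.le⟩ ⟨hρ.1, hρσ.le⟩ hfτ

theorem tau_mem_Icc_left (hanti : StrictAntiOn f (Icc σ 1)) (hσ0 : 0 ≤ σ) (hτσ : τ σ = σ)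
    (hτ : ∀ ρ ∈ Icc (0 : ℝ) 1, ρ ≠ σ → τ ρ ∈ Icc (0 : ℝ) 1 ∧ τ ρ ≠ ρ ∧ f (τ ρ) = f ρ)
    (hρ : ρ ∈ Icc σ 1) : τ ρ ∈ Icc 0 σ ∧ f (τ ρ) = f ρ := by
  obtain rfl | hσρ := hρ.1.eq_or_lt
  · exact ⟨by simp [hτσ, hσ0], by rw [hτσ]⟩
  obtain ⟨hτ01, hτρ, hfτ⟩ := hτ ρ ⟨hσ0.trans hσρ.le, hρ.2⟩ hσρ.ne'
  refine ⟨⟨hτ01.1, not_lt.1 fun hστ => hτρ ?_⟩, hfτ⟩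
  exact hanti.injOn ⟨hστ.le, hτ01.2⟩ ⟨hσρ.le, hρ.2⟩ hfτ

end Partner

theorem stmt9_general (f : ℝ → ℝ) (σ : ℝ) (τ : ℝ → ℝ)
    (hf_conc : StrictConcaveOn ℝ (Icc 0 1) f)
    (hσ : σ ∈ Ioo (0 : ℝ) 1)
    (hσmax : ∀ x ∈ Icc (0 : ℝ) 1, f x ≤ f σ)
    (hτσ : τ σ = σ)
    (hτ : ∀ ρ ∈ Icc (0 : ℝ) 1, ρ ≠ σ →
      τ ρ ∈ Icc (0 : ℝ) 1 ∧ τ ρ ≠ ρ ∧ f (τ ρ) = f ρ) :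
    (∀ ρ₀ ∈ Icc (0 : ℝ) σ, ∀ ρh ∈ Ioc (τ ρ₀) 1,
      ρ₀ < ρh ∧ f ρh < f ρ₀ ∧ (f ρh - f ρ₀) / (ρh - ρ₀) < 0) ∧
    (∀ ρ₀ ∈ Icc σ (1 : ℝ), ∀ ρh ∈ Ico 0 (τ ρ₀),
      ρh < ρ₀ ∧ f ρh < f ρ₀ ∧ 0 < (f ρ₀ - f ρh) / (ρ₀ - ρh)) := by
  have hσ01 : σ ∈ Icc (0 : ℝ) 1 := Ioo_subset_Icc_self hσ
  have hmono : StrictMonoOn f (Icc 0 σ) :=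
    (hf_conc.strictMonoOn_of_isMaxOn hσmax hσ01).mono fun _ hx =>
      ⟨⟨hx.1, hx.2.trans hσ01.2⟩, hx.2⟩
  have hanti : StrictAntiOn f (Icc σ 1) :=
    (hf_conc.strictAntiOn_of_isMaxOn hσmax hσ01).mono fun _ hx =>
      ⟨⟨hσ01.1.trans hx.1, hx.2⟩, hx.1⟩
  refine ⟨fun ρ₀ hρ₀ ρh hρh => ?_, fun ρ₀ hρ₀ ρh hρh => ?_⟩
  · obtain ⟨hτρ₀, hfτ⟩ := tau_mem_Icc_right hmono hσ01.2 hτσ hτ hρ₀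
    have hlt : ρ₀ < ρh := hρ₀.2.trans_lt (hτρ₀.1.trans_lt hρh.1)
    have hf_lt : f ρh < f ρ₀ := hfτ ▸ hanti hτρ₀ ⟨hτρ₀.1.trans hρh.1.le, hρh.2⟩ hρh.1
    exact ⟨hlt, hf_lt, div_neg_of_neg_of_pos (sub_neg.2 hf_lt) (sub_pos.2 hlt)⟩
  · obtain ⟨hτρ₀, hfτ⟩ := tau_mem_Icc_left hanti hσ01.1 hτσ hτ hρ₀
    have hlt : ρh < ρ₀ := hρh.2.trans_le (hτρ₀.2.trans hρ₀.1)
    have hf_lt : f ρh < f ρ₀ := hfτ ▸ hmono ⟨hρh.1, hρh.2.le.trans hτρ₀.2⟩ hτρ₀ hρh.2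
    exact ⟨hlt, hf_lt, div_pos (sub_pos.2 hf_lt) (sub_pos.2 hlt)⟩

/-- Admissibility conditions (3.4)–(3.5): waves produced by the Riemann solver
travel with negative speed on incoming roads and positive speed on outgoing
roads. -/
theorem stmt9 (f : ℝ → ℝ) (σ : ℝ) (τ : ℝ → ℝ)
    (hf_cont : ContinuousOn f (Icc 0 1))
    (hf_conc : StrictConcaveOn ℝ (Icc 0 1) f)
    (hf0 : f 0 = 0) (hf1 : f 1 = 0)
    (hσ : σ ∈ Ioo (0 : ℝ) 1)
    (hσmax : ∀ x ∈ Icc (0 : ℝ) 1, f x ≤ f σ)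
    (hτσ : τ σ = σ)
    (hτ : ∀ ρ ∈ Icc (0 : ℝ) 1, ρ ≠ σ →
      τ ρ ∈ Icc (0 : ℝ) 1 ∧ τ ρ ≠ ρ ∧ f (τ ρ) = f ρ) :
    (∀ ρ₀ ∈ Icc (0 : ℝ) σ, ∀ ρh ∈ Ioc (τ ρ₀) 1,
      ρ₀ < ρh ∧ f ρh < f ρ₀ ∧ (f ρh - f ρ₀) / (ρh - ρ₀) < 0) ∧
    (∀ ρ₀ ∈ Icc σ (1 : ℝ), ∀ ρh ∈ Ico 0 (τ ρ₀),
      ρh < ρ₀ ∧ f ρh < f ρ₀ ∧ 0 < (f ρ₀ - f ρh) / (ρ₀ - ρh)) :=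
  stmt9_general f σ τ hf_conc hσ hσmax hτσ hτ
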